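/- arXiv:1302.4605 — 4 statements merged into one kernel-verified Lean document; each statement's English description precedes it below -/
import Mathlib

section
/- Let (δ, ξ) be a pair where δ is Bernoulli(p) with p > 0 and ξ takes values in a measurable space (X, A). Let Q̃ denote the conditional distribution of ξ given δ = 1, and let R_k be the pushforward of the product measure Q̃^k under a measurable map t_k : X^k → ℝ^m (with R_0 a Dirac mass at a fixed constant t_0). If (δ_1, ξ_1), …, (δ_n, ξ_n) are i.i.d. copies of (δ, ξ) and T_{c,n} is the complete case statistic which on the event {δ_i = 1 for i ∈ A, δ_i = 0 for i ∉ A} equals t_{|A|} applied to the ξ_i with i ∈ A (in increasing order of index), then for every Borel set B ⊆ ℝ^m, P(T_{c,n} ∈ B) = ∑_{k=0}^{n} C(n,k) p^k (1-p)^{n-k} R_k(B). -/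
/-! Split the event `{T_{c,n} ∈ B}` according to the set `A` of indices with `δ_i = 1`. Under
the product law, the pairs indexed by `A` and those indexed by its complement are independent:
the former contribute `μ(δ = 1, ξ ∈ ·)^{⊗|A|} = p^{|A|} Q̃^{⊗|A|}`, the latter
`(1 - p)^{n - |A|}`. Summing over the `C(n, k)` sets `A` of size `k` gives the binomial mixture. -/

open MeasureTheory ProbabilityTheory ENNReal

/-- The complete case statistic associated with the sequence of maps `t`:
on the event where exactly the indices in `A` have `δ i = true`, it equals
`t |A|` applied to the `ξ i` with `i ∈ A`, in increasing order of index. -/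
noncomputable def ccStat {Ω X E : Type*} {n : ℕ}
    (t : (k : ℕ) → (Fin k → X) → E)
    (δ : Fin n → Ω → Bool) (ξ : Fin n → Ω → X) (ω : Ω) : E :=
  let s : Finset (Fin n) := Finset.univ.filter (fun i => δ i ω = true)
  t s.card (fun j => ξ (s.orderIsoOfFin rfl j) ω)

open Set
open scoped Finset

namespace MeasureTheory.Measure

variable {ι : Type*} [Fintype ι]

theorem pi_smul {α : ι → Type*} [∀ i, MeasurableSpace (α i)] (ν : ∀ i, Measure (α i))
    [∀ i, SigmaFinite (ν i)] {c : ι → ℝ≥0∞} (hc : ∀ i, c i ≠ ∞) :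
    Measure.pi (fun i => c i • ν i) = (∏ i, c i) • Measure.pi ν := by
  lift c to ι → NNReal using hc
  have (i : ι) : SigmaFinite ((c i : ℝ≥0∞) • ν i) := by
    rw [← ENNReal.smul_def]
    infer_instance
  refine pi_eq fun s _ => ?_
  simp only [smul_apply, pi_pi, smul_eq_mul, Finset.prod_mul_distrib]

theorem pi_univ_pi_inter_preimage_map {Y X : ι → Type*} [∀ i, MeasurableSpace (Y i)]
    [∀ i, MeasurableSpace (X i)] (μ : ∀ i, Measure (Y i)) [∀ i, IsFiniteMeasure (μ i)]
    (s : ∀ i, Set (Y i)) {f : ∀ i, Y i → X i} (hf : ∀ i, Measurable (f i))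
    {S : Set (∀ i, X i)} (hS : MeasurableSet S) :
    Measure.pi μ (univ.pi s ∩ (fun y i => f i (y i)) ⁻¹' S) =
      Measure.pi (fun i => ((μ i).restrict (s i)).map (f i)) S := by
  have hmeas : Measurable fun (y : ∀ i, Y i) i => f i (y i) :=
    measurable_pi_lambda _ fun i => (hf i).comp (measurable_pi_apply i)
  rw [inter_comm, ← restrict_apply (hmeas hS), restrict_pi_pi, ← map_apply hmeas hS,
    pi_map_pi fun i => (hf i).aemeasurable]

theorem pi_setOf_subtype_mem_and {α : ι → Type*} [∀ i, MeasurableSpace (α i)]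
    (μ : ∀ i, Measure (α i)) [∀ i, SigmaFinite (μ i)] (p : ι → Prop) [DecidablePred p]
    (S : Set (∀ i : Subtype p, α i)) (T : Set (∀ i : {i // ¬p i}, α i)) :
    Measure.pi μ {x | (fun i : Subtype p => x i) ∈ S ∧ (fun i : {i // ¬p i} => x i) ∈ T} =
      Measure.pi (fun i : Subtype p => μ i) S * Measure.pi (fun i : {i // ¬p i} => μ i) T := by
  rw [← prod_prod, ← (measurePreserving_piEquivPiSubtypeProd μ p).measure_preimage_equiv]
  rfl

theorem pi_setOf_orderEmbOfFin_mem_and [LinearOrder ι] {α : Type*} [MeasurableSpace α]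
    (μ : Measure α) [SigmaFinite μ] (A : Finset ι) (S : Set (Fin #A → α))
    (T : Set ({i // i ∉ A} → α)) :
    Measure.pi (fun _ : ι => μ)
        {x | (fun j => x (A.orderEmbOfFin rfl j)) ∈ S ∧ (fun i : {i // i ∉ A} => x i) ∈ T} =
      Measure.pi (fun _ => μ) S * Measure.pi (fun _ => μ) T := by
  let e := MeasurableEquiv.piCongrLeft (fun _ : A => α) (A.orderIsoOfFin rfl).toEquiv
  have hS : Measure.pi (fun _ : A => μ) (e.symm ⁻¹' S) = Measure.pi (fun _ => μ) S :=
    (measurePreserving_piCongrLeft (fun _ : A => μ) _).symm.measure_preimage_equiv S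
  rw [← hS]
  convert pi_setOf_subtype_mem_and (fun _ : ι => μ) (· ∈ A) (e.symm ⁻¹' S) T using 3
  · rfl
  · congr
    exact Subsingleton.elim _ _

end MeasureTheory.Measure

theorem Finset.filter_univ_eq_iff {ι : Type*} [Fintype ι] [DecidableEq ι] (b : ι → Bool)
    (A : Finset ι) :
    Finset.univ.filter (fun i => b i = true) = A ↔ ∀ i, b i = decide (i ∈ A) := by
  simp only [Finset.ext_iff, Finset.mem_filter, Finset.mem_univ, true_and]
  refine forall_congr' fun i => ?_
  cases b i <;> simp

theorem Finset.forall_eq_decide_mem_iff {ι : Type*} [LinearOrder ι] (A : Finset ι)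
    (b : ι → Bool) :
    (∀ i, b i = decide (i ∈ A)) ↔
      (∀ j, b (A.orderEmbOfFin rfl j) = true) ∧ ∀ i : {i // i ∉ A}, b i = false := by
  have hA (P : ι → Prop) : (∀ i ∈ A, P i) ↔ ∀ j, P (A.orderEmbOfFin rfl j) := by
    rw [← Set.forall_mem_range, Finset.range_orderEmbOfFin]
    rfl
  rw [← hA (b · = true)]
  refine ⟨fun h => ⟨fun i hi => by simp [h i, hi], fun i => by simp [h i, i.2]⟩,
    fun ⟨hin, hout⟩ i => ?_⟩
  by_cases hi : i ∈ A
  · simp [hin i hi, hi]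
  · simp [hout ⟨i, hi⟩, hi]

section Pattern

variable {ι X : Type*} [Fintype ι] [LinearOrder ι] [MeasurableSpace X]

theorem measurableSet_setOf_forall_eq_decide_mem_and (A : Finset ι) {S : Set (Fin #A → X)}
    (hS : MeasurableSet S) :
    MeasurableSet {x : ι → Bool × X |
      (∀ i, (x i).1 = decide (i ∈ A)) ∧ (fun j => (x (A.orderEmbOfFin rfl j)).2) ∈ S} := by
  have hpattern : MeasurableSet {x : ι → Bool × X | ∀ i, (x i).1 = decide (i ∈ A)} := by
    rw [ofPred_forall]
    exact .iInter fun i =>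
      measurable_fst.comp (measurable_pi_apply i) (measurableSet_singleton _)
  have hvalues : Measurable fun (x : ι → Bool × X) j => (x (A.orderEmbOfFin rfl j)).2 := by
    fun_prop
  exact hpattern.inter (hvalues hS)

theorem MeasureTheory.Measure.pi_setOf_forall_eq_decide_mem_and (μ : Measure (Bool × X))
    [IsFiniteMeasure μ] (A : Finset ι) {S : Set (Fin #A → X)} (hS : MeasurableSet S) :
    Measure.pi (fun _ : ι => μ) {x |
        (∀ i, (x i).1 = decide (i ∈ A)) ∧ (fun j => (x (A.orderEmbOfFin rfl j)).2) ∈ S} =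
      Measure.pi (fun _ => (μ.restrict {b | b.1 = true}).map Prod.snd) S *
        μ {b | b.1 = false} ^ (Fintype.card ι - #A) := by
  have hsplit : {x : ι → Bool × X |
        (∀ i, (x i).1 = decide (i ∈ A)) ∧ (fun j => (x (A.orderEmbOfFin rfl j)).2) ∈ S} =
      {x | (fun j => x (A.orderEmbOfFin rfl j)) ∈
          univ.pi (fun _ => {b | b.1 = true}) ∩ (fun y j => (y j).2) ⁻¹' S ∧
        (fun i : {i // i ∉ A} => x i) ∈ univ.pi (fun _ => {b | b.1 = false})} := by
    ext x
    simp only [mem_ofPred_eq, A.forall_eq_decide_mem_iff (fun i => (x i).1), mem_inter_iff,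
      mem_pi, mem_univ, true_implies, mem_preimage]
    tauto
  rw [hsplit, pi_setOf_orderEmbOfFin_mem_and,
    pi_univ_pi_inter_preimage_map _ _ (fun _ => measurable_snd) hS, pi_pi, Finset.prod_const,
    Finset.card_univ, Fintype.card_subtype_compl, Fintype.card_coe]

end Pattern

theorem ccStat_eq_of_filter_eq {Ω X E : Type*} {n : ℕ} (t : (k : ℕ) → (Fin k → X) → E)
    (δ : Fin n → Ω → Bool) (ξ : Fin n → Ω → X) {ω : Ω} {A : Finset (Fin n)}
    (hA : Finset.univ.filter (fun i => δ i ω = true) = A) :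
    ccStat t δ ξ ω = t #A (fun j => ξ (A.orderEmbOfFin rfl j) ω) := by
  subst hA
  rfl

theorem measure_ccStat_mem_eq_sum {Ω X E : Type*} [MeasurableSpace Ω] {n : ℕ} (P : Measure Ω)
    (t : (k : ℕ) → (Fin k → X) → E) {δ : Fin n → Ω → Bool} (ξ : Fin n → Ω → X)
    (hδ : ∀ i, Measurable (δ i)) (B : Set E) :
    P {ω | ccStat t δ ξ ω ∈ B} = ∑ A : Finset (Fin n),
      P {ω | (∀ i, δ i ω = decide (i ∈ A)) ∧
        t #A (fun j => ξ (A.orderEmbOfFin rfl j) ω) ∈ B} := by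
  set pattern : Ω → Finset (Fin n) := fun ω => Finset.univ.filter (fun i => δ i ω = true)
  have hfiber (A : Finset (Fin n)) :
      pattern ⁻¹' {A} = {ω | ∀ i, δ i ω = decide (i ∈ A)} := by
    ext ω
    exact Finset.filter_univ_eq_iff (δ · ω) A
  have hfiber_meas (A : Finset (Fin n)) : MeasurableSet (pattern ⁻¹' {A}) := by
    rw [hfiber, ofPred_forall]
    exact .iInter fun i => hδ i (measurableSet_singleton _)
  rw [← Measure.restrict_apply_univ, ← preimage_univ (f := pattern), ← Finset.coe_univ,
    ← sum_measure_preimage_singleton _ fun A _ => hfiber_meas A]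
  refine Finset.sum_congr rfl fun A _ => ?_
  rw [Measure.restrict_apply (hfiber_meas A), hfiber]
  congr 1
  ext ω
  exact and_congr_right fun hA => by
    rw [mem_ofPred_eq,
      ccStat_eq_of_filter_eq t δ ξ ((Finset.filter_univ_eq_iff (δ · ω) A).2 hA)]

theorem complete_case_distribution_general
    {Ω X : Type*} [MeasurableSpace Ω] [MeasurableSpace X]
    (P : Measure Ω)
    {m n : ℕ}
    (t : (k : ℕ) → (Fin k → X) → (Fin m → ℝ))
    (ht : ∀ k, Measurable (t k))
    (δ : Fin n → Ω → Bool) (ξ : Fin n → Ω → X)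
    (hδ : ∀ i, Measurable (δ i)) (hξ : ∀ i, Measurable (ξ i))
    -- `(δ_i, ξ_i)` are i.i.d. copies of a pair with common law `μ`
    (μ : Measure (Bool × X)) [IsProbabilityMeasure μ]
    (hiid : Measure.map (fun ω => fun i : Fin n => (δ i ω, ξ i ω)) P =
      Measure.pi (fun _ : Fin n => μ))
    -- `p = P(δ = 1) > 0`
    (p : ℝ≥0∞) (hp : p = μ {x | x.1 = true}) (hp0 : 0 < p)
    -- `Q̃` is the conditional law of `ξ` given `δ = 1`
    (Q : Measure X)
    (hQ : Q = p⁻¹ • Measure.map Prod.snd (μ.restrict {x | x.1 = true}))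
    -- `R k` is the law of `t k (ξ̃_1, …, ξ̃_k)` for i.i.d. `ξ̃_i ∼ Q̃`
    (R : ℕ → Measure (Fin m → ℝ))
    (hR : ∀ k, R k = Measure.map (t k) (Measure.pi (fun _ : Fin k => Q)))
    (B : Set (Fin m → ℝ)) (hB : MeasurableSet B) :
    P {ω | ccStat t δ ξ ω ∈ B} =
      ∑ k ∈ Finset.range (n + 1),
        (n.choose k : ℝ≥0∞) * p ^ k * (1 - p) ^ (n - k) * R k B := by
  have hp_top : p ≠ ∞ := hp ▸ measure_ne_top μ _
  have : IsFiniteMeasure Q := hQ ▸ Measure.smul_finite _ (ENNReal.inv_ne_top.2 hp0.ne')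
  have hobserved : (μ.restrict {x | x.1 = true}).map Prod.snd = p • Q := by
    rw [hQ, smul_smul, ENNReal.mul_inv_cancel hp0.ne' hp_top, one_smul]
  have hmissing : μ {x | x.1 = false} = 1 - p := by
    rw [hp, ← prob_compl_eq_one_sub (s := {x : Bool × X | x.1 = true})
      (measurable_fst (measurableSet_singleton true))]
    congr with x
    simp
  have hpair : Measurable fun ω i => (δ i ω, ξ i ω) :=
    measurable_pi_lambda _ fun i => (hδ i).prodMk (hξ i)
  calc P {ω | ccStat t δ ξ ω ∈ B}
      = ∑ A : Finset (Fin n), p ^ #A * (1 - p) ^ (n - #A) * R #A B := by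
        rw [measure_ccStat_mem_eq_sum P t ξ hδ B]
        refine Finset.sum_congr rfl fun A _ => ?_
        change P ((fun ω i => (δ i ω, ξ i ω)) ⁻¹' {x : Fin n → Bool × X |
          (∀ i, (x i).1 = decide (i ∈ A)) ∧
            (fun j => (x (A.orderEmbOfFin rfl j)).2) ∈ t #A ⁻¹' B}) = _
        rw [← Measure.map_apply hpair
            (measurableSet_setOf_forall_eq_decide_mem_and A (ht #A hB)),
          hiid, Measure.pi_setOf_forall_eq_decide_mem_and μ A (ht #A hB), hobserved,
          Measure.pi_smul _ fun _ => hp_top, hmissing, hR, Measure.map_apply (ht _) hB]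
        simp only [Measure.smul_apply, smul_eq_mul, Finset.prod_const, Finset.card_univ,
          Fintype.card_fin]
        ring
    _ = _ := by
        rw [← Finset.powerset_univ,
          Finset.sum_powerset_apply_card fun k => p ^ k * (1 - p) ^ (n - k) * R k B]
        simp only [Finset.card_univ, Fintype.card_fin, nsmul_eq_mul, mul_assoc]

/-- Lemma 1 of Koul, Müller and Schick: the distribution of the complete case
statistic is the binomial mixture of the laws `R k`, where `R k` is the pushforward
of the `k`-fold product of the conditional law `Q̃` of `ξ` given `δ = 1` under `t k`. -/
theorem complete_case_distribution
    {Ω X : Type*} [MeasurableSpace Ω] [MeasurableSpace X]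
    (P : Measure Ω) [IsProbabilityMeasure P]
    {m n : ℕ}
    (t : (k : ℕ) → (Fin k → X) → (Fin m → ℝ))
    (ht : ∀ k, Measurable (t k))
    (δ : Fin n → Ω → Bool) (ξ : Fin n → Ω → X)
    (hδ : ∀ i, Measurable (δ i)) (hξ : ∀ i, Measurable (ξ i))
    -- `(δ_i, ξ_i)` are i.i.d. copies of a pair with common law `μ`
    (μ : Measure (Bool × X)) [IsProbabilityMeasure μ]
    (hiid : Measure.map (fun ω => fun i : Fin n => (δ i ω, ξ i ω)) P =
      Measure.pi (fun _ : Fin n => μ))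
    -- `p = P(δ = 1) > 0`
    (p : ℝ≥0∞) (hp : p = μ {x | x.1 = true}) (hp0 : 0 < p)
    -- `Q̃` is the conditional law of `ξ` given `δ = 1`
    (Q : Measure X)
    (hQ : Q = p⁻¹ • Measure.map Prod.snd (μ.restrict {x | x.1 = true}))
    -- `R k` is the law of `t k (ξ̃_1, …, ξ̃_k)` for i.i.d. `ξ̃_i ∼ Q̃`
    (R : ℕ → Measure (Fin m → ℝ))
    (hR : ∀ k, R k = Measure.map (t k) (Measure.pi (fun _ : Fin k => Q)))
    (B : Set (Fin m → ℝ)) (hB : MeasurableSet B) :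
    P {ω | ccStat t δ ξ ω ∈ B} =
      ∑ k ∈ Finset.range (n + 1),
        (n.choose k : ℝ≥0∞) * p ^ k * (1 - p) ^ (n - k) * R k B :=
  complete_case_distribution_general P t ht δ ξ hδ hξ μ hiid p hp hp0 Q hQ R hR B hB
end

section
/- With the setup of the complete case statistic, T_{c,n} has the same distribution as t_K(ξ̃_1, …, ξ̃_K), where K is a Binomial(n, p) random variable independent of the i.i.d. sequence ξ̃_1, ξ̃_2, … with common distribution Q̃ (the conditional law of ξ given δ = 1), and t_0 applied to the empty vector is the fixed constant. -/
open MeasureTheory ProbabilityTheory ENNReal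

lemma ccAux_pi_restrict {ι : Type*} [Fintype ι] {α : Type*} [MeasurableSpace α]
    (μ : Measure α) [IsFiniteMeasure μ] (T : Set α) :
    (Measure.pi (fun _ : ι => μ)).restrict (Set.pi Set.univ (fun _ => T)) =
      Measure.pi (fun _ : ι => μ.restrict T) := by
  refine (Measure.pi_eq (μ := fun _ : ι => μ.restrict T) (fun s hs => ?_)).symm
  rw [Measure.restrict_apply (MeasurableSet.univ_pi hs)]
  have h : (Set.pi Set.univ s) ∩ (Set.pi Set.univ fun _ => T)
      = Set.pi Set.univ (fun i => s i ∩ T) := by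
    ext x; simp [Set.mem_pi, forall_and]
  rw [h, Measure.pi_pi]
  simp [Measure.restrict_apply (hs _)]

lemma ccAux_pi_map_reindex {ι ι' α β : Type*} [Fintype ι] [Fintype ι'] [MeasurableSpace α]
    [MeasurableSpace β] (f : ι ≃ ι') (ν : Measure α) [IsFiniteMeasure ν]
    {g : α → β} (hg : Measurable g) :
    Measure.map (fun (w : ι' → α) (j : ι) => g (w (f j))) (Measure.pi fun _ : ι' => ν) =
      Measure.pi (fun _ : ι => ν.map g) := by
  have hmeas : Measurable fun (w : ι' → α) (j : ι) => g (w (f j)) :=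
    measurable_pi_lambda _ fun j => hg.comp (measurable_pi_apply (f j))
  refine (Measure.pi_eq (μ := fun _ : ι => ν.map g) fun s hs => ?_).symm
  rw [Measure.map_apply hmeas (MeasurableSet.univ_pi hs)]
  have h : (fun (w : ι' → α) (j : ι) => g (w (f j))) ⁻¹' Set.pi Set.univ s
      = Set.pi Set.univ (fun i' => g ⁻¹' s (f.symm i')) := by
    ext w
    simp only [Set.mem_preimage, Set.mem_pi, Set.mem_univ, forall_true_left]
    exact ⟨fun h i' => by simpa using h (f.symm i'), fun h j => by simpa using h (f j)⟩
  rw [h, Measure.pi_pi, Equiv.prod_comp f.symm fun j => ν (g ⁻¹' s j)]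
  exact Finset.prod_congr rfl fun i _ => (Measure.map_apply hg (hs _)).symm

lemma ccAux_pi_smul {ι : Type*} [Fintype ι] {α : Type*} [MeasurableSpace α]
    (ν : Measure α) [IsFiniteMeasure ν] (c : ℝ≥0∞) (hc : c ≠ ∞) :
    Measure.pi (fun _ : ι => c • ν) = c ^ (Fintype.card ι) • Measure.pi (fun _ : ι => ν) := by
  haveI : IsFiniteMeasure (c • ν) :=
    ⟨by simp [lt_top_iff_ne_top, ENNReal.mul_ne_top hc (measure_ne_top ν _)]⟩
  refine Measure.pi_eq (μ := fun _ : ι => c • ν) fun s hs => ?_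
  simp [Measure.pi_pi, Finset.prod_mul_distrib, Finset.prod_const, Finset.card_univ, mul_comm]

lemma ccAux_pi_value {n k : ℕ} {X E : Type*} [MeasurableSpace X] [MeasurableSpace E]
    (μ : Measure (Bool × X)) [IsProbabilityMeasure μ]
    (P : Fin n → Prop) [DecidablePred P] (f : Fin k ≃ {x // P x})
    (t : (Fin k → X) → E) (htm : Measurable t) {A : Set E} (hA : MeasurableSet A) :
    Measure.pi (fun _ : Fin n => μ)
      {v | (∀ i, ((v i).1 = true ↔ P i)) ∧ t (fun j => (v (f j)).2) ∈ A}
      = Measure.pi (fun _ : Fin k =>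
            Measure.map Prod.snd (μ.restrict {x | x.1 = true})) (t ⁻¹' A)
        * (μ {x | x.1 = false}) ^ (Fintype.card {x // ¬ P x}) := by
  set S₁ : Set ({x // P x} → Bool × X) :=
    {w | ∀ i, (w i).1 = true} ∩
      ((fun (w : {x // P x} → Bool × X) (j : Fin k) => (w (f j)).2) ⁻¹' (t ⁻¹' A)) with hS1def
  set S₂ : Set ({x // ¬ P x} → Bool × X) := {w | ∀ i, (w i).1 = false} with hS2def
  have hHmeas : Measurable fun (w : {x // P x} → Bool × X) (j : Fin k) => (w (f j)).2 :=
    measurable_pi_lambda _ fun j => measurable_snd.comp (measurable_pi_apply (f j))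
  have hpre : MeasurableSet ((fun (w : {x // P x} → Bool × X) (j : Fin k) =>
      (w (f j)).2) ⁻¹' (t ⁻¹' A)) := hHmeas (htm hA)
  have hS1meas : MeasurableSet S₁ := by
    have h1 : MeasurableSet {w : {x // P x} → Bool × X | ∀ i, (w i).1 = true} := by
      have heq : {w : {x // P x} → Bool × X | ∀ i, (w i).1 = true}
          = ⋂ i, (fun w : {x // P x} → Bool × X => (w i).1) ⁻¹' {true} := by
        ext w; simp [Set.mem_iInter]
      rw [heq]
      exact MeasurableSet.iInter fun i =>
        (measurable_fst.comp (measurable_pi_apply i)) (measurableSet_singleton true)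
    exact h1.inter hpre
  have hS2meas : MeasurableSet S₂ := by
    have heq : S₂ = ⋂ i, (fun w : {x // ¬ P x} → Bool × X => (w i).1) ⁻¹' {false} := by
      ext w; simp [hS2def, Set.mem_iInter]
    rw [heq]
    exact MeasurableSet.iInter fun i =>
      (measurable_fst.comp (measurable_pi_apply i)) (measurableSet_singleton false)
  have hmp := measurePreserving_piEquivPiSubtypeProd (fun _ : Fin n => μ) P
  have hSeq : {v : Fin n → Bool × X | (∀ i, ((v i).1 = true ↔ P i)) ∧
        t (fun j => (v (f j)).2) ∈ A}
      = (MeasurableEquiv.piEquivPiSubtypeProd (fun _ : Fin n => Bool × X) P)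
          ⁻¹' (S₁ ×ˢ S₂) := by
    ext v
    constructor
    · rintro ⟨h1, h2⟩
      refine ⟨⟨fun i => (h1 i).mpr i.2, h2⟩, fun i => ?_⟩
      have h3 : ¬ (v (i : Fin n)).1 = true := fun hc => i.2 ((h1 i).mp hc)
      exact Bool.eq_false_iff.mpr h3
    · rintro ⟨⟨h1, h2⟩, h3⟩
      refine ⟨fun i => ?_, h2⟩
      by_cases hi : P i
      · simp only [hi, iff_true]
        exact h1 ⟨i, hi⟩
      · simp only [hi, iff_false]
        have h4 : (v i).1 = false := h3 ⟨i, hi⟩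
        simp [h4]
  rw [hSeq, hmp.measure_preimage (hS1meas.prod hS2meas).nullMeasurableSet, Measure.prod_prod]
  -- value of the complete-case factor
  have h1val : Measure.pi (fun _ : {x // P x} => μ) S₁
      = Measure.pi (fun _ : Fin k =>
          Measure.map Prod.snd (μ.restrict {x | x.1 = true})) (t ⁻¹' A) := by
    have heq1 : {w : {x // P x} → Bool × X | ∀ i, (w i).1 = true}
        = Set.pi Set.univ (fun _ => {x : Bool × X | x.1 = true}) := by
      ext w; simp [Set.mem_pi]
    rw [hS1def, heq1, Set.inter_comm, ← Measure.restrict_apply hpre,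
      ccAux_pi_restrict μ _, ← Measure.map_apply hHmeas (htm hA),
      show (fun (w : {x // P x} → Bool × X) (j : Fin k) => (w (f j)).2)
        = (fun w j => Prod.snd (w (f j))) from rfl,
      ccAux_pi_map_reindex f (μ.restrict {x | x.1 = true}) measurable_snd]
  -- value of the complement factor
  have h2val : Measure.pi (fun _ : {x // ¬ P x} => μ) S₂
      = (μ {x | x.1 = false}) ^ (Fintype.card {x // ¬ P x}) := by
    have heq : S₂ = Set.pi Set.univ (fun _ => {x : Bool × X | x.1 = false}) := by
      ext w; simp [hS2def, Set.mem_pi]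
    rw [heq, Measure.pi_pi, Finset.prod_const, Finset.card_univ]
  rw [h1val, h2val]

/-- Remark 3 of Koul, Müller and Schick: the complete case statistic `T_{c,n}` has
the same distribution as `t_K(ξ̃_1, …, ξ̃_K)`, where `K ∼ Binomial(n, p)` is
independent of the i.i.d. sequence `ξ̃_1, ξ̃_2, …` with common law `Q̃`, the
conditional law of `ξ` given `δ = 1`. -/
theorem complete_case_binomial_representation
    {Ω Ω' X : Type*} [MeasurableSpace Ω] [MeasurableSpace Ω'] [MeasurableSpace X]
    (P : Measure Ω) [IsProbabilityMeasure P]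
    (P' : Measure Ω') [IsProbabilityMeasure P']
    {m n : ℕ}
    (t : (k : ℕ) → (Fin k → X) → (Fin m → ℝ))
    (ht : ∀ k, Measurable (t k))
    (δ : Fin n → Ω → Bool) (ξ : Fin n → Ω → X)
    (hδ : ∀ i, Measurable (δ i)) (hξ : ∀ i, Measurable (ξ i))
    -- `(δ_i, ξ_i)` are i.i.d. copies of a pair with common law `μ`
    (μ : Measure (Bool × X)) [IsProbabilityMeasure μ]
    (hiid : Measure.map (fun ω => fun i : Fin n => (δ i ω, ξ i ω)) P =
      Measure.pi (fun _ : Fin n => μ))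
    -- `p = P(δ = 1) > 0`
    (p : ℝ≥0∞) (hp : p = μ {x | x.1 = true}) (hp0 : 0 < p)
    -- `Q̃` is the conditional law of `ξ` given `δ = 1`
    (Q : Measure X) [IsProbabilityMeasure Q]
    (hQ : Q = p⁻¹ • Measure.map Prod.snd (μ.restrict {x | x.1 = true}))
    -- `K` has a Binomial(n, p) distribution
    (K : Ω' → ℕ) (hKmeas : Measurable K)
    (hK : ∀ k : ℕ, Measure.map K P' {k} =
      (n.choose k : ℝ≥0∞) * p ^ k * (1 - p) ^ (n - k))
    -- `ξ̃_0, ξ̃_1, …` is an i.i.d. sequence with common law `Q̃`, independent of `K`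
    (ξt : ℕ → Ω' → X) (hξt : ∀ j, Measurable (ξt j))
    (hindep : ∀ M : ℕ,
      Measure.map (fun ω => (K ω, fun j : Fin M => ξt j ω)) P' =
        (Measure.map K P').prod (Measure.pi (fun _ : Fin M => Q))) :
    Measure.map (ccStat t δ ξ) P =
      Measure.map (fun ω => t (K ω) (fun j : Fin (K ω) => ξt j ω)) P' := by
  -- basic facts about `p`, `T`, `ν`
  have hTmeas : MeasurableSet {x : Bool × X | x.1 = true} :=
    measurable_fst (measurableSet_singleton true)
  have hp1 : p ≤ 1 := by rw [hp]; exact prob_le_one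
  have hpt : p ≠ ∞ := (lt_of_le_of_lt hp1 one_lt_top).ne
  have hFalse : μ {x : Bool × X | x.1 = false} = 1 - p := by
    have h : {x : Bool × X | x.1 = false} = {x : Bool × X | x.1 = true}ᶜ := by
      ext x; simp
    rw [h, measure_compl hTmeas (measure_ne_top μ _), measure_univ, hp]
  have hν : Measure.map Prod.snd (μ.restrict {x | x.1 = true}) = p • Q := by
    rw [hQ, smul_smul, ENNReal.mul_inv_cancel hp0.ne' hpt, one_smul]
  haveI hνfin : IsFiniteMeasure (Measure.map Prod.snd (μ.restrict {x : Bool × X | x.1 = true})) := by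
    refine ⟨?_⟩
    rw [hν]
    simpa using lt_of_le_of_lt hp1 one_lt_top
  -- measurability of singletons in `Fin n → Bool`
  haveI : MeasurableSingletonClass (Fin n → Bool) := by
    constructor
    intro b
    have h : ({b} : Set (Fin n → Bool)) = Set.pi Set.univ (fun i => {b i}) := by
      ext f; simp [funext_iff, Set.mem_pi]
    rw [h]; exact MeasurableSet.univ_pi fun i => measurableSet_singleton _
  -- measurability of the two statistics
  have mcc : Measurable (ccStat t δ ξ) := by
    have hg : Measurable (fun q : (Fin n → X) × (Fin n → Bool) =>
        t (Finset.univ.filter fun i => q.2 i = true).card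
          (fun j => q.1 ((Finset.univ.filter fun i => q.2 i = true).orderIsoOfFin rfl j))) := by
      refine measurable_from_prod_countable_left fun b => ?_
      have h2 := (ht (Finset.univ.filter fun i => b i = true).card).comp
        (measurable_pi_lambda
          (fun (x : Fin n → X) (j : Fin (Finset.univ.filter fun i => b i = true).card) =>
            x ((Finset.univ.filter fun i => b i = true).orderIsoOfFin rfl j))
          (fun j => measurable_pi_apply _))
      exact h2
    exact hg.comp ((measurable_pi_lambda _ hξ).prodMk (measurable_pi_lambda _ hδ))
  have mf' : Measurable (fun ω => t (K ω) (fun j : Fin (K ω) => ξt j ω)) := by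
    have hg : Measurable (fun q : (ℕ → X) × ℕ => t q.2 (fun j : Fin q.2 => q.1 j)) := by
      refine measurable_from_prod_countable_left fun k => ?_
      have h2 := (ht k).comp
        (measurable_pi_lambda (fun (x : ℕ → X) (j : Fin k) => x j)
          (fun j => measurable_pi_apply _))
      exact h2
    exact hg.comp ((measurable_pi_lambda _ hξt).prodMk hKmeas)
  ext A hA
  rw [Measure.map_apply mcc hA, Measure.map_apply mf' hA]
  -- the common quantity
  set q : ℕ → ℝ≥0∞ := fun k => Measure.pi (fun _ : Fin k => Q) (t k ⁻¹' A) with hqdef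
  -- RHS computation
  have hRHS : P' ((fun ω => t (K ω) (fun j : Fin (K ω) => ξt j ω)) ⁻¹' A)
      = ∑ k ∈ Finset.range (n + 1),
          (n.choose k : ℝ≥0∞) * p ^ k * (1 - p) ^ (n - k) * q k := by
    have hcover : (fun ω => t (K ω) (fun j : Fin (K ω) => ξt j ω)) ⁻¹' A
        = ⋃ k : ℕ, ((fun ω => (K ω, fun j : Fin k => ξt j ω)) ⁻¹' ({k} ×ˢ (t k ⁻¹' A))) := by
      ext ω
      simp only [Set.mem_preimage, Set.mem_iUnion, Set.mem_prod, Set.mem_singleton_iff]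
      constructor
      · intro h
        exact ⟨K ω, rfl, h⟩
      · rintro ⟨k, hk, h⟩
        subst hk
        exact h
    have hgmeas : ∀ k : ℕ, Measurable (fun ω => (K ω, fun j : Fin k => ξt j ω)) :=
      fun k => hKmeas.prodMk (measurable_pi_lambda _ fun j => hξt j)
    have hsets : ∀ k : ℕ, MeasurableSet ({k} ×ˢ (t k ⁻¹' A) : Set (ℕ × (Fin k → X))) :=
      fun k => (measurableSet_singleton k).prod ((ht k) hA)
    have hdisj : Pairwise (Function.onFun Disjoint
        (fun k : ℕ => ((fun ω => (K ω, fun j : Fin k => ξt j ω)) ⁻¹' ({k} ×ˢ (t k ⁻¹' A))))) := by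
      intro k l hkl
      refine Set.disjoint_left.2 fun ω hk hl => hkl ?_
      have h1 : K ω = k := hk.1
      have h2 : K ω = l := hl.1
      rw [← h1, h2]
    rw [hcover, measure_iUnion hdisj (fun k => (hgmeas k) (hsets k))]
    have hterm : ∀ k : ℕ,
        P' ((fun ω => (K ω, fun j : Fin k => ξt j ω)) ⁻¹' ({k} ×ˢ (t k ⁻¹' A)))
          = (n.choose k : ℝ≥0∞) * p ^ k * (1 - p) ^ (n - k) * q k := by
      intro k
      rw [← Measure.map_apply (hgmeas k) (hsets k), hindep k, Measure.prod_prod, hK k]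
    rw [tsum_congr hterm]
    refine tsum_eq_sum fun k hk => ?_
    have hkn : n < k := by simpa using hk
    simp [Nat.choose_eq_zero_of_lt hkn]
  rw [hRHS]
  -- LHS computation
  have hLHS : P (ccStat t δ ξ ⁻¹' A)
      = ∑ s : Finset (Fin n), p ^ s.card * (1 - p) ^ (n - s.card) * q s.card := by
    have mV : Measurable (fun ω => fun i : Fin n => (δ i ω, ξ i ω)) :=
      measurable_pi_lambda _ fun i => (hδ i).prodMk (hξ i)
    set S : Finset (Fin n) → Set (Fin n → Bool × X) := fun s =>
      {v | (∀ i, ((v i).1 = true ↔ i ∈ s)) ∧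
        t s.card (fun j => (v ↑(s.orderIsoOfFin rfl j)).2) ∈ A} with hSdef
    have hSmeas : ∀ s, MeasurableSet (S s) := by
      intro s
      have h1 : MeasurableSet {v : Fin n → Bool × X | ∀ i, ((v i).1 = true ↔ i ∈ s)} := by
        have heq : {v : Fin n → Bool × X | ∀ i, ((v i).1 = true ↔ i ∈ s)}
            = ⋂ i, (fun v : Fin n → Bool × X => (v i).1) ⁻¹' {b | b = true ↔ i ∈ s} := by
          ext v; simp [Set.mem_iInter]
        rw [heq]
        exact MeasurableSet.iInter fun i =>
          (measurable_fst.comp (measurable_pi_apply i)) ((Set.to_countable _).measurableSet)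
      have h2 : MeasurableSet {v : Fin n → Bool × X |
          t s.card (fun j => (v ↑(s.orderIsoOfFin rfl j)).2) ∈ A} :=
        ((ht _).comp (measurable_pi_lambda _ fun j =>
          measurable_snd.comp (measurable_pi_apply _))) hA
      exact h1.inter h2
    have hcover : ccStat t δ ξ ⁻¹' A
        = ⋃ s : Finset (Fin n), (fun ω => fun i : Fin n => (δ i ω, ξ i ω)) ⁻¹' (S s) := by
      ext ω
      simp only [Set.mem_preimage, Set.mem_iUnion, hSdef, Set.mem_setOf_eq]
      constructor
      · intro h
        refine ⟨Finset.univ.filter (fun i => δ i ω = true), fun i => ?_, h⟩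
        simp
      · rintro ⟨s, h1, h2⟩
        have hs : s = Finset.univ.filter (fun i => δ i ω = true) := by
          ext i
          rw [Finset.mem_filter]
          simp only [Finset.mem_univ, true_and]
          exact (h1 i).symm
        subst hs
        exact h2
    have hdisj : Pairwise (Function.onFun Disjoint
        (fun s : Finset (Fin n) => (fun ω => fun i : Fin n => (δ i ω, ξ i ω)) ⁻¹' (S s))) := by
      intro s s' hss'
      refine Set.disjoint_left.2 fun ω h h' => hss' ?_
      ext i
      exact (h.1 i).symm.trans (h'.1 i)
    rw [hcover, measure_iUnion hdisj (fun s => mV (hSmeas s)), tsum_fintype]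
    refine Finset.sum_congr rfl fun s _ => ?_
    rw [← Measure.map_apply mV (hSmeas s), hiid]
    -- compute the product measure of `S s`
    have hcard2 : Fintype.card {x : Fin n // ¬ x ∈ s} = n - s.card := by
      rw [Fintype.card_subtype]
      rw [Finset.filter_not, Finset.filter_mem_eq_inter, Finset.univ_inter,
        Finset.card_sdiff_of_subset (Finset.subset_univ s), Finset.card_univ, Fintype.card_fin]
    have hval : (Measure.pi fun _ : Fin n => μ)
        {v : Fin n → Bool × X | (∀ i, ((v i).1 = true ↔ i ∈ s)) ∧
          (t s.card fun j => (v ↑(s.orderIsoOfFin rfl j)).2) ∈ A}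
        = Measure.pi (fun _ : Fin s.card =>
            Measure.map Prod.snd (μ.restrict {x | x.1 = true})) (t s.card ⁻¹' A)
          * (μ {x | x.1 = false}) ^ (Fintype.card {x : Fin n // ¬ x ∈ s}) :=
      ccAux_pi_value μ (· ∈ s) (s.orderIsoOfFin rfl).toEquiv (t s.card) (ht s.card) hA
    rw [hSdef]
    rw [hval, hν, ccAux_pi_smul Q p hpt, Measure.smul_apply, smul_eq_mul,
      Fintype.card_fin, hFalse, hcard2, hqdef]
    ring
  rw [hLHS]
  -- regroup the sum over subsets by cardinality
  have hgroup := Finset.sum_powerset_apply_card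
    (f := fun k => p ^ k * (1 - p) ^ (n - k) * q k) (x := (Finset.univ : Finset (Fin n)))
  rw [Finset.powerset_univ] at hgroup
  rw [hgroup, Finset.card_univ, Fintype.card_fin]
  refine Finset.sum_congr rfl fun k _ => ?_
  rw [nsmul_eq_mul]
  ring
end

section
/- Let p ∈ (0,1] and let H_n(B) = ∑_{k=0}^n C(n,k) p^k (1-p)^{n-k} R_k(B) for Borel probability measures R_k on ℝ^m. If R_n converges weakly to a Borel probability measure L, then H_n converges weakly to the same limit L. -/
/-!
Integrating a bounded continuous `f` against `H n` gives `∑_{k ≤ n} w n k * ∫ f ∂R k` with the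
binomial weights `w n k = C(n,k) p^k (1-p)^(n-k)`. These are nonnegative, sum to one in each row,
and for fixed `k` they tend to zero as `n → ∞` because `1 - p < 1`. By Toeplitz's summation
theorem such weighted averages of the convergent sequence `∫ f ∂R k` converge to its limit
`∫ f ∂L`.
-/

open MeasureTheory ENNReal BoundedContinuousFunction Filter Topology Finset

section Toeplitz

variable {E : Type*} [NormedAddCommGroup E] [NormedSpace ℝ E] {w : ℕ → ℕ → ℝ}

theorem tendsto_sum_range_smul_of_tendsto_zero (hw0 : ∀ n k, 0 ≤ w n k)
    (hsum : ∀ n, ∑ k ∈ range (n + 1), w n k ≤ 1)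
    (hcol : ∀ k, Tendsto (fun n => w n k) atTop (𝓝 0))
    {b : ℕ → E} (hb : Tendsto b atTop (𝓝 0)) :
    Tendsto (fun n => ∑ k ∈ range (n + 1), w n k • b k) atTop (𝓝 0) := by
  rw [Metric.tendsto_atTop]
  intro ε hε
  obtain ⟨K, hK⟩ := Metric.tendsto_atTop.mp hb (ε / 2) (half_pos hε)
  have hhead : Tendsto (fun n => ∑ k ∈ range K, w n k * ‖b k‖) atTop (𝓝 0) := by
    simpa using tendsto_finsetSum (range K) fun k _ => (hcol k).mul_const ‖b k‖
  obtain ⟨N, hN⟩ := Metric.tendsto_atTop.mp hhead (ε / 2) (half_pos hε)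
  refine ⟨max N K, fun n hn => ?_⟩
  have hNn : N ≤ n := le_of_max_le_left hn
  have hKn : K ≤ n + 1 := by omega
  have htail : ∑ k ∈ Ico K (n + 1), w n k * ‖b k‖ ≤ ε / 2 :=
    calc ∑ k ∈ Ico K (n + 1), w n k * ‖b k‖
        ≤ ∑ k ∈ Ico K (n + 1), w n k * (ε / 2) := by
          gcongr with k hk
          · exact hw0 n k
          · simpa using (hK k (mem_Ico.mp hk).1).le
      _ ≤ ∑ k ∈ range (n + 1), w n k * (ε / 2) := by
          gcongr
          · exact fun k _ _ => mul_nonneg (hw0 n k) (half_pos hε).le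
          · exact fun k hk => mem_range.mpr (mem_Ico.mp hk).2
      _ ≤ ε / 2 := by
          rw [← sum_mul]
          exact mul_le_of_le_one_left (half_pos hε).le (hsum n)
  calc dist (∑ k ∈ range (n + 1), w n k • b k) 0
      ≤ ∑ k ∈ range (n + 1), w n k * ‖b k‖ := by
        rw [dist_zero_right]
        refine (norm_sum_le _ _).trans_eq (sum_congr rfl fun k _ => ?_)
        rw [norm_smul, Real.norm_of_nonneg (hw0 n k)]
    _ = ∑ k ∈ range K, w n k * ‖b k‖ + ∑ k ∈ Ico K (n + 1), w n k * ‖b k‖ :=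
        (sum_range_add_sum_Ico _ hKn).symm
    _ < ε / 2 + ε / 2 := by
        refine add_lt_add_of_lt_of_le ((le_abs_self _).trans_lt ?_) htail
        simpa only [Real.dist_0_eq_abs] using hN n hNn
    _ = ε := add_halves ε

theorem tendsto_sum_range_smul_of_tendsto (hw0 : ∀ n k, 0 ≤ w n k)
    (hsum : ∀ n, ∑ k ∈ range (n + 1), w n k = 1)
    (hcol : ∀ k, Tendsto (fun n => w n k) atTop (𝓝 0))
    {a : ℕ → E} {l : E} (ha : Tendsto a atTop (𝓝 l)) :
    Tendsto (fun n => ∑ k ∈ range (n + 1), w n k • a k) atTop (𝓝 l) := by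
  have hb := tendsto_sum_range_smul_of_tendsto_zero hw0 (fun n => (hsum n).le) hcol
    (tendsto_sub_nhds_zero_iff.mpr ha)
  refine tendsto_sub_nhds_zero_iff.mp (hb.congr fun n => ?_)
  simp only [smul_sub, sum_sub_distrib, ← sum_smul, hsum n, one_smul]

end Toeplitz

theorem tendsto_choose_mul_pow_sub_atTop {q : ℝ} (hq0 : 0 ≤ q) (hq1 : q < 1) (k : ℕ) :
    Tendsto (fun n => (n.choose k : ℝ) * q ^ (n - k)) atTop (𝓝 0) := by
  rcases hq0.eq_or_lt with rfl | hq
  · refine tendsto_const_nhds.congr' ?_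
    filter_upwards [eventually_gt_atTop k] with n hn
    rw [zero_pow (by omega), mul_zero]
  · have hlim := (tendsto_pow_const_mul_const_pow_of_lt_one k hq0 hq1).div_const (q ^ k)
    rw [zero_div] at hlim
    refine squeeze_zero' (Eventually.of_forall fun n => by positivity) ?_ hlim
    filter_upwards [eventually_ge_atTop k] with n hn
    rw [pow_sub₀ q hq.ne' hn, le_div_iff₀ (by positivity)]
    calc (n.choose k : ℝ) * (q ^ n * (q ^ k)⁻¹) * q ^ k = n.choose k * q ^ n := by
          field_simp
      _ ≤ (n : ℝ) ^ k * q ^ n := by gcongr; exact_mod_cast Nat.choose_le_pow n k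

def binomialWeight (p : ℝ) (n k : ℕ) : ℝ := n.choose k * p ^ k * (1 - p) ^ (n - k)

theorem binomialWeight_nonneg {p : ℝ} (hp0 : 0 ≤ p) (hp1 : p ≤ 1) (n k : ℕ) :
    0 ≤ binomialWeight p n k := by
  unfold binomialWeight
  have : 0 ≤ 1 - p := sub_nonneg.mpr hp1
  positivity

theorem sum_binomialWeight (p : ℝ) (n : ℕ) : ∑ k ∈ range (n + 1), binomialWeight p n k = 1 := by
  have h := add_pow p (1 - p) n
  rw [add_sub_cancel, one_pow] at h
  rw [h]
  exact sum_congr rfl fun k _ => by unfold binomialWeight; ring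

theorem tendsto_binomialWeight_atTop {p : ℝ} (hp0 : 0 < p) (hp1 : p ≤ 1) (k : ℕ) :
    Tendsto (fun n => binomialWeight p n k) atTop (𝓝 0) := by
  have h := (tendsto_choose_mul_pow_sub_atTop (sub_nonneg.mpr hp1) (by linarith) k).const_mul
    (p ^ k)
  rw [mul_zero] at h
  refine h.congr fun n => ?_
  unfold binomialWeight
  ring

theorem integral_finsetSum_smul_measure {α G ι : Type*} [MeasurableSpace α]
    [NormedAddCommGroup G] [NormedSpace ℝ G] {s : Finset ι} {c : ι → ℝ≥0∞} {μ : ι → Measure α}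
    {f : α → G} (hc : ∀ i ∈ s, c i ≠ ∞) (hf : ∀ i ∈ s, Integrable f (μ i)) :
    ∫ x, f x ∂(∑ i ∈ s, c i • μ i) = ∑ i ∈ s, (c i).toReal • ∫ x, f x ∂(μ i) := by
  rw [integral_finsetSum_measure fun i hi => (hf i hi).smul_measure (hc i hi)]
  simp only [integral_smul_measure]

theorem binomial_mixture_weak_convergence_general
    {m : ℕ} (p : ℝ≥0∞) (hp0 : 0 < p) (hp1 : p ≤ 1)
    (R : ℕ → Measure (Fin m → ℝ)) (hRprob : ∀ k, IsProbabilityMeasure (R k))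
    (L : Measure (Fin m → ℝ))
    (H : ℕ → Measure (Fin m → ℝ))
    (hH : ∀ n, H n = ∑ k ∈ Finset.range (n + 1),
      ((n.choose k : ℝ≥0∞) * p ^ k * (1 - p) ^ (n - k)) • R k)
    -- weak convergence of `R_n` to `L`
    (hRL : ∀ f : (Fin m → ℝ) →ᵇ ℝ,
      Filter.Tendsto (fun n => ∫ x, f x ∂(R n)) Filter.atTop (nhds (∫ x, f x ∂L))) :
    -- weak convergence of `H_n` to `L`
    ∀ f : (Fin m → ℝ) →ᵇ ℝ,
      Filter.Tendsto (fun n => ∫ x, f x ∂(H n)) Filter.atTop (nhds (∫ x, f x ∂L)) := by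
  intro f
  have hp : p ≠ ∞ := ne_top_of_le_ne_top one_ne_top hp1
  have hpr0 : 0 < p.toReal := ENNReal.toReal_pos hp0.ne' hp
  have hpr1 : p.toReal ≤ 1 := ENNReal.toReal_le_of_le_ofReal zero_le_one (by simpa using hp1)
  have hweight (n k : ℕ) :
      ((n.choose k : ℝ≥0∞) * p ^ k * (1 - p) ^ (n - k)).toReal = binomialWeight p.toReal n k := by
    simp [binomialWeight, ENNReal.toReal_sub_of_le hp1 one_ne_top]
  have hint (n : ℕ) : ∫ x, f x ∂(H n) =
      ∑ k ∈ range (n + 1), binomialWeight p.toReal n k • ∫ x, f x ∂(R k) := by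
    rw [hH n, integral_finsetSum_smul_measure (fun k _ => by finiteness) fun k _ => f.integrable _]
    simp only [hweight]
  simp only [hint]
  exact tendsto_sum_range_smul_of_tendsto (binomialWeight_nonneg hpr0.le hpr1)
    (sum_binomialWeight _) (tendsto_binomialWeight_atTop hpr0 hpr1) (hRL f)

/-- Corollary (b) of Koul, Müller and Schick: if `R_n` converges weakly to a Borel
probability measure `L`, then the binomial mixtures
`H_n = ∑_{k=0}^n C(n,k) p^k (1-p)^{n-k} R_k` converge weakly to the same limit `L`. -/
theorem binomial_mixture_weak_convergence
    {m : ℕ} (p : ℝ≥0∞) (hp0 : 0 < p) (hp1 : p ≤ 1)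
    (R : ℕ → Measure (Fin m → ℝ)) (hRprob : ∀ k, IsProbabilityMeasure (R k))
    (L : Measure (Fin m → ℝ)) [IsProbabilityMeasure L]
    (H : ℕ → Measure (Fin m → ℝ))
    (hH : ∀ n, H n = ∑ k ∈ Finset.range (n + 1),
      ((n.choose k : ℝ≥0∞) * p ^ k * (1 - p) ^ (n - k)) • R k)
    -- weak convergence of `R_n` to `L`
    (hRL : ∀ f : (Fin m → ℝ) →ᵇ ℝ,
      Filter.Tendsto (fun n => ∫ x, f x ∂(R n)) Filter.atTop (nhds (∫ x, f x ∂L))) :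
    -- weak convergence of `H_n` to `L`
    ∀ f : (Fin m → ℝ) →ᵇ ℝ,
      Filter.Tendsto (fun n => ∫ x, f x ∂(H n)) Filter.atTop (nhds (∫ x, f x ∂L)) :=
  binomial_mixture_weak_convergence_general p hp0 hp1 R hRprob L H hH hRL
end

section
/- Let (U, V) have joint distribution G on ℝ^m × [0,1] with E‖U‖² < ∞, and let G̃ be another distribution of (U,V) with dG̃/dG = π̃ where π̃ ≥ η > 0. Denote μ_G(V) = E_G[U | V] and μ_{G̃}(V) = E_{G̃}[U | V], and set W_G = E_G[(U − μ_G(V))(U − μ_G(V))ᵀ], W_{G̃} = E_{G̃}[(U − μ_{G̃}(V))(U − μ_{G̃}(V))ᵀ]. Then for every a ∈ ℝ^m, aᵀ W_{G̃} a ≥ η aᵀ W_G a. In particular, if W_G is positive definite then W_{G̃} is positive definite. -/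
/-!
The quadratic form `aᵀ W a` is the expected conditional variance `E[(aᵀU - E[aᵀU | V])²]`.
Under `G`, the conditional expectation `E_G[aᵀU | V]` minimises `E_G[(aᵀU - b(V))²]` over
functions `b` of `V`, so in particular it does at least as well as `b = E_G̃[aᵀU | V]`; and
`dG̃ ≥ η dG` bounds `η` times the `G`-integral of the nonnegative `(aᵀU - E_G̃[aᵀU | V])²` by
its `G̃`-integral, which is `aᵀ W_G̃ a`.
-/

open MeasureTheory ENNReal Matrix

namespace MeasureTheory

variable {α : Type*} {m m0 : MeasurableSpace α} {μ ν : Measure α}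

lemma Measure.smul_le_withDensity {π : α → ℝ≥0∞} {c : ℝ≥0∞} (hc : ∀ x, c ≤ π x) :
    c • μ ≤ μ.withDensity π := by
  rw [← withDensity_const]
  exact withDensity_mono (ae_of_all _ hc)

lemma MemLp.of_smul_measure_le {E : Type*} [NormedAddCommGroup E] {f : α → E} {p c : ℝ≥0∞}
    (hc₀ : c ≠ 0) (hc : c ≠ ∞) (hμν : c • μ ≤ ν) (hf : MemLp f p ν) : MemLp f p μ := by
  refine hf.of_measure_le_smul (ENNReal.inv_ne_top.2 hc₀) ?_
  calc μ = c⁻¹ • c • μ := by rw [smul_smul, ENNReal.inv_mul_cancel hc₀ hc, one_smul]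
    _ ≤ c⁻¹ • ν := by gcongr

lemma mul_integral_le_integral_of_smul_measure_le {c : ℝ} (hc : 0 ≤ c)
    (hμν : ENNReal.ofReal c • μ ≤ ν) {f : α → ℝ} (hf₀ : 0 ≤ f) (hf : Integrable f ν) :
    c * ∫ x, f x ∂μ ≤ ∫ x, f x ∂ν := by
  calc c * ∫ x, f x ∂μ = ∫ x, f x ∂(ENNReal.ofReal c • μ) := by
        rw [integral_smul_measure, toReal_ofReal hc, smul_eq_mul]
    _ ≤ ∫ x, f x ∂ν := integral_mono_measure hμν (ae_of_all _ hf₀) hf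

lemma integral_mul_sub_condExp_eq_zero (hm : m ≤ m0) [IsFiniteMeasure μ] {F h : α → ℝ}
    (hF : MemLp F 2 μ) (hh : MemLp h 2 μ) (hhm : StronglyMeasurable[m] h) :
    ∫ x, h x * (F x - μ[F|m] x) ∂μ = 0 := by
  have hhF : Integrable (fun x => h x * F x) μ := hh.integrable_mul hF
  have hpull : ∫ x, h x * F x ∂μ = ∫ x, h x * μ[F|m] x ∂μ := by
    rw [← integral_condExp hm]
    exact integral_congr_ae
      (condExp_mul_of_stronglyMeasurable_left hhm hhF (hF.integrable one_le_two))
  have hhp : Integrable (fun x => h x * μ[F|m] x) μ := hh.integrable_mul (hF.condExp one_le_two)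
  simp_rw [mul_sub]
  rw [integral_sub hhF hhp, hpull, sub_self]

lemma integral_sq_sub_condExp_le (hm : m ≤ m0) [IsFiniteMeasure μ] {F q : α → ℝ}
    (hF : MemLp F 2 μ) (hq : MemLp q 2 μ) (hqm : StronglyMeasurable[m] q) :
    ∫ x, (F x - μ[F|m] x) ^ 2 ∂μ ≤ ∫ x, (F x - q x) ^ 2 ∂μ := by
  set p := μ[F|m]
  set h := p - q
  have hp : MemLp p 2 μ := hF.condExp one_le_two
  have hh : MemLp h 2 μ := hp.sub hq
  have hcross : ∫ x, h x * (F x - p x) ∂μ = 0 :=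
    integral_mul_sub_condExp_eq_zero hm hF hh (stronglyMeasurable_condExp.sub hqm)
  have I₁ : Integrable (fun x => (F x - p x) ^ 2) μ := (hF.sub hp).integrable_sq
  have I₂ : Integrable (fun x => 2 * (h x * (F x - p x))) μ :=
    (hh.integrable_mul (hF.sub hp)).const_mul 2
  have I₃ : Integrable (fun x => h x ^ 2) μ := hh.integrable_sq
  have hexpand : ∀ x, (F x - q x) ^ 2
      = (F x - p x) ^ 2 + 2 * (h x * (F x - p x)) + h x ^ 2 := by
    intro x; simp only [h, Pi.sub_apply]; ring
  have I₁₂ : Integrable (fun x => (F x - p x) ^ 2 + 2 * (h x * (F x - p x))) μ := I₁.add I₂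
  simp_rw [hexpand]
  rw [integral_add I₁₂ I₃, integral_add I₁ I₂, integral_const_mul, hcross]
  have : 0 ≤ ∫ x, h x ^ 2 ∂μ := integral_nonneg fun x => sq_nonneg (h x)
  linarith

lemma mul_integral_sq_sub_condExp_le_of_smul_measure_le (hm : m ≤ m0) [IsFiniteMeasure μ]
    {c : ℝ} (hc : 0 < c) (hμν : ENNReal.ofReal c • μ ≤ ν) {F : α → ℝ} (hF : MemLp F 2 ν) :
    c * ∫ x, (F x - μ[F|m] x) ^ 2 ∂μ ≤ ∫ x, (F x - ν[F|m] x) ^ 2 ∂ν := by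
  have hq : MemLp (ν[F|m]) 2 ν := hF.condExp one_le_two
  have transfer {f : α → ℝ} (hf : MemLp f 2 ν) : MemLp f 2 μ :=
    hf.of_smul_measure_le (ENNReal.ofReal_pos.2 hc).ne' ofReal_ne_top hμν
  calc c * ∫ x, (F x - μ[F|m] x) ^ 2 ∂μ ≤ c * ∫ x, (F x - ν[F|m] x) ^ 2 ∂μ := by
        refine mul_le_mul_of_nonneg_left ?_ hc.le
        exact integral_sq_sub_condExp_le hm (transfer hF) (transfer hq) stronglyMeasurable_condExp
    _ ≤ ∫ x, (F x - ν[F|m] x) ^ 2 ∂ν :=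
        mul_integral_le_integral_of_smul_measure_le hc.le hμν (fun x => sq_nonneg _)
          (hF.sub hq).integrable_sq

section Finite

variable {ι : Type*} [Fintype ι]

lemma memLp_dotProduct {U : α → ι → ℝ} {p : ℝ≥0∞} (hU : ∀ i, MemLp (fun x => U x i) p μ)
    (a : ι → ℝ) : MemLp (fun x => a ⬝ᵥ U x) p μ :=
  memLp_finsetSum _ fun i _ => (hU i).const_mul (a i)

lemma condExp_dotProduct {U : α → ι → ℝ} (hU : ∀ i, Integrable (fun x => U x i) μ)
    (a : ι → ℝ) :
    μ[fun x => a ⬝ᵥ U x|m] =ᵐ[μ] fun x => a ⬝ᵥ fun i => μ[fun y => U y i|m] x := by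
  have hsum : (fun x => a ⬝ᵥ U x) = ∑ i, a i • fun x => U x i := by
    ext x; simp [dotProduct]
  rw [hsum]
  filter_upwards [condExp_finsetSum (s := Finset.univ) (fun i _ => (hU i).smul (a i)) m,
    ae_all_iff.2 fun i => condExp_smul (μ := μ) (a i) (fun x => U x i) m] with x hsum hsmul
  simp [hsum, hsmul, Finset.sum_apply, dotProduct]

lemma dotProduct_mulVec_eq_integral_sq {d : α → ι → ℝ} (hd : ∀ i, MemLp (fun x => d x i) 2 μ)
    {W : Matrix ι ι ℝ} (hW : ∀ i j, W i j = ∫ x, d x i * d x j ∂μ) (a : ι → ℝ) :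
    a ⬝ᵥ W *ᵥ a = ∫ x, (a ⬝ᵥ d x) ^ 2 ∂μ := by
  have hint : ∀ i j, Integrable (fun x => a i * d x i * (a j * d x j)) μ := fun i j =>
    ((hd i).const_mul (a i)).integrable_mul ((hd j).const_mul (a j))
  calc a ⬝ᵥ W *ᵥ a = ∑ i, ∑ j, ∫ x, a i * d x i * (a j * d x j) ∂μ := by
        simp only [dotProduct, mulVec, hW, Finset.mul_sum]
        refine Fintype.sum_congr _ _ fun i => Fintype.sum_congr _ _ fun j => ?_
        rw [← integral_mul_const, ← integral_const_mul]
        congr 1 with x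
        ring
    _ = ∫ x, ∑ i, ∑ j, a i * d x i * (a j * d x j) ∂μ := by
        rw [integral_finsetSum _ fun i _ => integrable_finsetSum _ fun j _ => hint i j]
        exact Finset.sum_congr rfl fun i _ => (integral_finsetSum _ fun j _ => hint i j).symm
    _ = ∫ x, (a ⬝ᵥ d x) ^ 2 ∂μ := by simp_rw [sq, dotProduct, Finset.sum_mul_sum]

lemma dotProduct_mulVec_eq_integral_sq_sub_condExp [IsFiniteMeasure μ] {U μU : α → ι → ℝ}
    (hU : ∀ i, MemLp (fun x => U x i) 2 μ) (hμU : ∀ i, (fun x => μU x i) = μ[fun x => U x i|m])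
    {W : Matrix ι ι ℝ} (hW : ∀ i j, W i j = ∫ x, (U x i - μU x i) * (U x j - μU x j) ∂μ)
    (a : ι → ℝ) :
    a ⬝ᵥ W *ᵥ a = ∫ x, (a ⬝ᵥ U x - μ[fun x => a ⬝ᵥ U x|m] x) ^ 2 ∂μ := by
  have hd : ∀ i, MemLp (fun x => U x i - μU x i) 2 μ := fun i =>
    (hU i).sub (hμU i ▸ (hU i).condExp one_le_two)
  rw [dotProduct_mulVec_eq_integral_sq (d := fun x => U x - μU x) hd hW a]
  refine integral_congr_ae ?_
  filter_upwards [condExp_dotProduct (fun i => (hU i).integrable one_le_two) a] with x hx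
  have hμUx : (fun i => μ[fun y => U y i|m] x) = μU x := funext fun i => (congrFun (hμU i) x).symm
  rw [hx, hμUx, dotProduct_sub]

end Finite

end MeasureTheory

lemma Matrix.PosDef.of_mul_dotProduct_mulVec_le {ι : Type*} [Fintype ι] {W W' : Matrix ι ι ℝ}
    (hW : W.PosDef) (hW' : W'.IsHermitian) {c : ℝ} (hc : 0 < c)
    (h : ∀ a, c * (a ⬝ᵥ W *ᵥ a) ≤ a ⬝ᵥ W' *ᵥ a) : W'.PosDef :=
  .of_dotProduct_mulVec_pos hW' fun a ha =>
    (mul_pos hc (by simpa using hW.dotProduct_mulVec_pos ha)).trans_le (by simpa using h a)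

theorem conditional_centering_matrix_bound_general {m : ℕ}
    (G Gt : Measure ((Fin m → ℝ) × ℝ))
    [IsProbabilityMeasure G] [IsProbabilityMeasure Gt]
    (πt : (Fin m → ℝ) × ℝ → ℝ≥0∞)
    (hGt : Gt = G.withDensity πt)
    (η : ℝ) (hη : 0 < η) (hlow : ∀ x, ENNReal.ofReal η ≤ πt x)
    (hU2t : Integrable (fun x : (Fin m → ℝ) × ℝ => ‖x.1‖ ^ 2) Gt)
    -- `μ_G(V) = E_G[U | V]` and `μ_G̃(V) = E_G̃[U | V]`, componentwise
    (μG μGt : (Fin m → ℝ) × ℝ → Fin m → ℝ)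
    (hμG : ∀ i, (fun x => μG x i) =
      G[fun x : (Fin m → ℝ) × ℝ => x.1 i | MeasurableSpace.comap Prod.snd inferInstance])
    (hμGt : ∀ i, (fun x => μGt x i) =
      Gt[fun x : (Fin m → ℝ) × ℝ => x.1 i | MeasurableSpace.comap Prod.snd inferInstance])
    (WG WGt : Matrix (Fin m) (Fin m) ℝ)
    (hWG : ∀ i j, WG i j = ∫ x, (x.1 i - μG x i) * (x.1 j - μG x j) ∂G)
    (hWGt : ∀ i j, WGt i j = ∫ x, (x.1 i - μGt x i) * (x.1 j - μGt x j) ∂Gt) :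
    (∀ a : Fin m → ℝ, η * (a ⬝ᵥ WG.mulVec a) ≤ a ⬝ᵥ WGt.mulVec a) ∧
      (WG.PosDef → WGt.PosDef) := by
  have hGGt : ENNReal.ofReal η • G ≤ Gt := hGt ▸ Measure.smul_le_withDensity hlow
  have hUt : ∀ i, MemLp (fun x : (Fin m → ℝ) × ℝ => x.1 i) 2 Gt := memLp_pi_iff.1 <|
    (memLp_two_iff_integrable_sq_norm measurable_fst.aestronglyMeasurable).2 hU2t
  have hU : ∀ i, MemLp (fun x : (Fin m → ℝ) × ℝ => x.1 i) 2 G := fun i =>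
    (hUt i).of_smul_measure_le (ENNReal.ofReal_pos.2 hη).ne' ofReal_ne_top hGGt
  have key (a : Fin m → ℝ) : η * (a ⬝ᵥ WG.mulVec a) ≤ a ⬝ᵥ WGt.mulVec a := by
    rw [dotProduct_mulVec_eq_integral_sq_sub_condExp hU hμG hWG,
      dotProduct_mulVec_eq_integral_sq_sub_condExp hUt hμGt hWGt]
    exact mul_integral_sq_sub_condExp_le_of_smul_measure_le measurable_snd.comap_le hη hGGt
      (memLp_dotProduct hUt a)
  refine ⟨key, fun hWG_pos => hWG_pos.of_mul_dotProduct_mulVec_le ?_ hη key⟩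
  ext i j
  simp only [conjTranspose_apply, star_trivial, hWGt, mul_comm]

/-- Remark 6a (second part) of Koul, Müller and Schick: if `dG̃/dG = π̃ ≥ η > 0`, then
for the conditional-centering matrices `W_G = E_G[(U − μ_G(V))(U − μ_G(V))ᵀ]` and
`W_G̃ = E_G̃[(U − μ_G̃(V))(U − μ_G̃(V))ᵀ]` (with `μ_G(V) = E_G[U|V]`) one has
`aᵀ W_G̃ a ≥ η aᵀ W_G a` for every `a ∈ ℝ^m`; in particular `W_G` positive definite
implies `W_G̃` positive definite. -/
theorem conditional_centering_matrix_bound {m : ℕ}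
    (G Gt : Measure ((Fin m → ℝ) × ℝ))
    [IsProbabilityMeasure G] [IsProbabilityMeasure Gt]
    (πt : (Fin m → ℝ) × ℝ → ℝ≥0∞) (hπt : Measurable πt)
    (hGt : Gt = G.withDensity πt)
    (η : ℝ) (hη : 0 < η) (hlow : ∀ x, ENNReal.ofReal η ≤ πt x)
    -- square integrability of `U` under `G` (hence under `G̃`)
    (hU2 : Integrable (fun x : (Fin m → ℝ) × ℝ => ‖x.1‖ ^ 2) G)
    (hU2t : Integrable (fun x : (Fin m → ℝ) × ℝ => ‖x.1‖ ^ 2) Gt)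
    -- `μ_G(V) = E_G[U | V]` and `μ_G̃(V) = E_G̃[U | V]`, componentwise
    (μG μGt : (Fin m → ℝ) × ℝ → Fin m → ℝ)
    (hμG : ∀ i, (fun x => μG x i) =
      G[fun x : (Fin m → ℝ) × ℝ => x.1 i | MeasurableSpace.comap Prod.snd inferInstance])
    (hμGt : ∀ i, (fun x => μGt x i) =
      Gt[fun x : (Fin m → ℝ) × ℝ => x.1 i | MeasurableSpace.comap Prod.snd inferInstance])
    (WG WGt : Matrix (Fin m) (Fin m) ℝ)
    (hWG : ∀ i j, WG i j = ∫ x, (x.1 i - μG x i) * (x.1 j - μG x j) ∂G)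
    (hWGt : ∀ i j, WGt i j = ∫ x, (x.1 i - μGt x i) * (x.1 j - μGt x j) ∂Gt) :
    (∀ a : Fin m → ℝ, η * (a ⬝ᵥ WG.mulVec a) ≤ a ⬝ᵥ WGt.mulVec a) ∧
      (WG.PosDef → WGt.PosDef) :=
  conditional_centering_matrix_bound_general G Gt πt hGt η hη hlow hU2t μG μGt hμG hμGt WG WGt hWG
    hWGt
end
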